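/- arXiv:2002.10686 — 4 statements merged into one kernel-verified Lean document; each statement's English description precedes it below -/
import Mathlib

section
/- Let B ⊂ ℝ³ be an axis-aligned closed box with centre ω_c and a pair of opposite corners ω_p and ω_q, let t ≥ 0, and let u ∈ ℝ³ be nonzero. For every ω ∈ B, the angle between exp([ω_c t]×)·u and exp([ω t]×)·u is at most α(B,t) := 0.5‖ω_p t − ω_q t‖₂. -/
/-- The 3×3 skew-symmetric (cross-product) matrix of `a ∈ ℝ³`. -/
def skew (a : Fin 3 → ℝ) : Matrix (Fin 3) (Fin 3) ℝ :=
  !![0, -a 2, a 1; a 2, 0, -a 0; -a 1, a 0, 0]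

/-- The angle between two vectors of ℝ³ (w.r.t. the Euclidean inner product and norm). -/
noncomputable def angle3 (v w : Fin 3 → ℝ) : ℝ :=
  Real.arccos ((∑ i, v i * w i) /
    (Real.sqrt (∑ i, (v i) ^ 2) * Real.sqrt (∑ i, (w i) ^ 2)))

namespace AngleExpSkew

open NormedSpace (exp)
open Matrix

/-! ### Basic algebraic lemmas about `skew` -/

lemma skew_transpose (a : Fin 3 → ℝ) : (skew a)ᵀ = - skew a := by
  ext i j; fin_cases i <;> fin_cases j <;> simp [skew]

lemma skew_smul (c : ℝ) (a : Fin 3 → ℝ) : skew (c • a) = c • skew a := by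
  ext i j; fin_cases i <;> fin_cases j <;> simp [skew, mul_comm]

lemma skew_sub (a b : Fin 3 → ℝ) : skew (a - b) = skew a - skew b := by
  ext i j; fin_cases i <;> fin_cases j <;> (simp [skew]; try ring)

lemma exp_skew_orth (a : Fin 3 → ℝ) :
    (exp (skew a))ᵀ * exp (skew a) = 1 := by
  rw [← Matrix.exp_transpose, skew_transpose,
    ← Matrix.exp_add_of_commute _ _ (Commute.neg_left (Commute.refl (skew a)))]
  simp

lemma sum_sq_mulVec_exp_skew (a v : Fin 3 → ℝ) :
    ∑ i, ((exp (skew a)).mulVec v i)^2 = ∑ i, v i ^ 2 := by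
  have h1 : ((exp (skew a)).mulVec v) ⬝ᵥ ((exp (skew a)).mulVec v) = v ⬝ᵥ v := by
    rw [dotProduct_mulVec, ← Matrix.transpose_transpose (exp (skew a)),
      Matrix.mulVec_transpose, Matrix.vecMul_vecMul, Matrix.transpose_transpose,
      exp_skew_orth, Matrix.vecMul_one]
  simpa [dotProduct, sq] using h1

lemma skew_mulVec_sq_le (c v : Fin 3 → ℝ) :
    ∑ i, ((skew c).mulVec v i)^2 ≤ (∑ i, (c i)^2) * (∑ i, (v i)^2) := by
  simp [skew, Matrix.mulVec, dotProduct, Fin.sum_univ_three]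
  nlinarith [sq_nonneg (c 0*v 0 + c 1*v 1 + c 2*v 2)]

lemma enorm_eq (x : EuclideanSpace ℝ (Fin 3)) : ‖x‖ = Real.sqrt (∑ i, (x i)^2) := by
  rw [EuclideanSpace.norm_eq]
  congr 1
  refine Finset.sum_congr rfl fun i _ => ?_
  rw [Real.norm_eq_abs, sq_abs]

/-! ### The chord bound -/

lemma chord_bound (p q u : Fin 3 → ℝ) :
    Real.sqrt (∑ i, ((exp (skew p)).mulVec u i - (exp (skew q)).mulVec u i)^2)
      ≤ Real.sqrt (∑ i, (p i - q i)^2) * Real.sqrt (∑ i, (u i)^2) := by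
  letI : SeminormedRing (Matrix (Fin 3) (Fin 3) ℝ) := Matrix.linftyOpSemiNormedRing
  letI : NormedRing (Matrix (Fin 3) (Fin 3) ℝ) := Matrix.linftyOpNormedRing
  letI : NormedAlgebra ℝ (Matrix (Fin 3) (Fin 3) ℝ) := Matrix.linftyOpNormedAlgebra
  set P := skew p with hP
  set Q := skew q with hQ
  let L₀ : Matrix (Fin 3) (Fin 3) ℝ →ₗ[ℝ] EuclideanSpace ℝ (Fin 3) :=
    { toFun := fun M => (WithLp.equiv 2 (Fin 3 → ℝ)).symm (M.mulVec u)
      map_add' := fun M N => by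
        rw [Matrix.add_mulVec]; rfl
      map_smul' := fun c M => by
        simp [Matrix.smul_mulVec] }
  let L : Matrix (Fin 3) (Fin 3) ℝ →L[ℝ] EuclideanSpace ℝ (Fin 3) :=
    LinearMap.toContinuousLinearMap L₀
  set K := Real.sqrt (∑ i, (p i - q i)^2) * Real.sqrt (∑ i, (u i)^2) with hK
  set g : ℝ → EuclideanSpace ℝ (Fin 3) :=
    fun τ => L (exp (τ • P) * exp ((1-τ) • Q)) with hg
  have hderiv : ∀ τ : ℝ, HasDerivAt g
      (L (exp (τ • P) * (P - Q) * exp ((1-τ) • Q))) τ := by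
    intro τ
    have h1 : HasDerivAt (fun τ : ℝ => exp (τ • P)) (exp (τ • P) * P) τ :=
      hasDerivAt_exp_smul_const P τ
    have h2' : HasDerivAt (fun s : ℝ => exp (s • Q)) (exp ((1-τ) • Q) * Q) (1-τ) :=
      hasDerivAt_exp_smul_const Q (1-τ)
    have hinner : HasDerivAt (fun τ : ℝ => 1 - τ) (-1) τ := by
      simpa using ((hasDerivAt_id τ).const_sub 1)
    have h2 : HasDerivAt (fun τ : ℝ => exp ((1-τ) • Q))
        ((-1 : ℝ) • (exp ((1-τ) • Q) * Q)) τ := h2'.scomp τ hinner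
    have hmul := (h1.mul h2)
    have heq : exp (τ • P) * P * exp ((1-τ) • Q)
        + exp (τ • P) * ((-1 : ℝ) • (exp ((1-τ) • Q) * Q))
        = exp (τ • P) * (P - Q) * exp ((1-τ) • Q) := by
      have hcomm : Q * exp ((1-τ) • Q) = exp ((1-τ) • Q) * Q :=
        (((Commute.refl Q).smul_right (1-τ)).exp_right)
      simp only [neg_one_smul, mul_neg, ← hcomm]
      noncomm_ring
    rw [← heq]
    exact L.hasFDerivAt.comp_hasDerivAt τ hmul
  have hbound : ∀ τ : ℝ, ‖L (exp (τ • P) * (P - Q) * exp ((1-τ) • Q))‖ ≤ K := by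
    intro τ
    have hvec : L (exp (τ • P) * (P - Q) * exp ((1-τ) • Q))
        = (WithLp.equiv 2 (Fin 3 → ℝ)).symm
          ((exp (τ • P)).mulVec (((P - Q)).mulVec ((exp ((1-τ) • Q)).mulVec u))) := by
      simp only [L, L₀, LinearMap.coe_toContinuousLinearMap', LinearMap.coe_mk, AddHom.coe_mk]
      change (WithLp.equiv 2 (Fin 3 → ℝ)).symm ((exp (τ • P) * (P - Q) * exp ((1-τ) • Q)) *ᵥ u) = _
      rw [← Matrix.mulVec_mulVec, ← Matrix.mulVec_mulVec]
    rw [enorm_eq, hvec]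
    simp only [WithLp.equiv_symm_apply, PiLp.toLp_apply]
    set w := (exp ((1-τ) • Q)).mulVec u with hw
    have e1 : ∑ i, ((exp (τ • P)).mulVec ((P - Q).mulVec w) i)^2
        = ∑ i, ((P - Q).mulVec w i)^2 := by
      rw [hP, ← skew_smul]
      exact sum_sq_mulVec_exp_skew _ _
    have e2 : ∑ i, ((P - Q).mulVec w i)^2 ≤ (∑ i, (p i - q i)^2) * (∑ i, (w i)^2) := by
      rw [hP, hQ, ← skew_sub]
      simpa using skew_mulVec_sq_le (p - q) w
    have e3 : ∑ i, (w i)^2 = ∑ i, (u i)^2 := by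
      rw [hw, hQ, ← skew_smul]
      exact sum_sq_mulVec_exp_skew _ _
    rw [hK, ← Real.sqrt_mul (by positivity)]
    apply Real.sqrt_le_sqrt
    rw [e1]
    calc ∑ i, ((P - Q).mulVec w i)^2 ≤ (∑ i, (p i - q i)^2) * (∑ i, (w i)^2) := e2
      _ = (∑ i, (p i - q i)^2) * (∑ i, (u i)^2) := by rw [e3]
  have hmvt := norm_image_sub_le_of_norm_deriv_le_segment'
    (f := g) (f' := fun τ => L (exp (τ • P) * (P - Q) * exp ((1-τ) • Q)))
    (C := K) (a := 0) (b := 1)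
    (fun τ _ => (hderiv τ).hasDerivWithinAt) (fun τ _ => hbound τ) 1
    (by norm_num)
  have hg1 : g 1 = (WithLp.equiv 2 (Fin 3 → ℝ)).symm ((exp P).mulVec u) := by
    simp only [hg]
    norm_num
    rfl
  have hg0 : g 0 = (WithLp.equiv 2 (Fin 3 → ℝ)).symm ((exp Q).mulVec u) := by
    simp only [hg]
    norm_num
    rfl
  rw [hg1, hg0] at hmvt
  have : ‖(WithLp.equiv 2 (Fin 3 → ℝ)).symm ((exp P).mulVec u)
      - (WithLp.equiv 2 (Fin 3 → ℝ)).symm ((exp Q).mulVec u)‖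
      = Real.sqrt (∑ i, ((exp (skew p)).mulVec u i - (exp (skew q)).mulVec u i)^2) := by
    rw [enorm_eq]
    simp only [PiLp.sub_apply, WithLp.equiv_symm_apply, PiLp.toLp_apply]
    rfl
  rw [this] at hmvt
  simpa using hmvt

/-! ### Spherical geometry: triangle inequality for angles, chord–angle relation -/

lemma cs3 (v w : Fin 3 → ℝ) : (∑ i, v i * w i)^2 ≤ (∑ i, (v i)^2) * (∑ i, (w i)^2) := by
  simp only [Fin.sum_univ_three]
  nlinarith [sq_nonneg (v 0*w 1 - v 1*w 0), sq_nonneg (v 0*w 2 - v 2*w 0),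
    sq_nonneg (v 1*w 2 - v 2*w 1)]

lemma gram_id (a1 a2 a3 b1 b2 b3 c1 c2 c3 : ℝ) :
    (a1^2+a2^2+a3^2)*(b1^2+b2^2+b3^2)*(c1^2+c2^2+c3^2)
      + 2*(a1*b1+a2*b2+a3*b3)*(b1*c1+b2*c2+b3*c3)*(a1*c1+a2*c2+a3*c3)
      - (a1*b1+a2*b2+a3*b3)^2*(c1^2+c2^2+c3^2)
      - (b1*c1+b2*c2+b3*c3)^2*(a1^2+a2^2+a3^2)
      - (a1*c1+a2*c2+a3*c3)^2*(b1^2+b2^2+b3^2)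
      = (a1*(b2*c3 - b3*c2) - a2*(b1*c3 - b3*c1) + a3*(b1*c2 - b2*c1))^2 := by ring

lemma gram3 (v w z : Fin 3 → ℝ) (hv : ∑ i, (v i)^2 = 1) (hw : ∑ i, (w i)^2 = 1)
    (hz : ∑ i, (z i)^2 = 1) :
    ((∑ i, v i * z i) - (∑ i, v i * w i) * (∑ i, w i * z i))^2
      ≤ (1 - (∑ i, v i * w i)^2) * (1 - (∑ i, w i * z i)^2) := by
  simp only [Fin.sum_univ_three] at *
  have := gram_id (v 0) (v 1) (v 2) (w 0) (w 1) (w 2) (z 0) (z 1) (z 2)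
  rw [hv, hw, hz] at this
  have h2 : (1 - (v 0*w 0+v 1*w 1+v 2*w 2)^2) * (1 - (w 0*z 0+w 1*z 1+w 2*z 2)^2)
      - ((v 0*z 0+v 1*z 1+v 2*z 2) - (v 0*w 0+v 1*w 1+v 2*w 2)*(w 0*z 0+w 1*z 1+w 2*z 2))^2
      = (v 0*(w 1*z 2 - w 2*z 1) - v 1*(w 0*z 2 - w 2*z 0) + v 2*(w 0*z 1 - w 1*z 0))^2 := by
    linear_combination this
  linarith [sq_nonneg (v 0*(w 1*z 2 - w 2*z 1) - v 1*(w 0*z 2 - w 2*z 0)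
    + v 2*(w 0*z 1 - w 1*z 0)), h2]

lemma arccos_le_arccos' {x y : ℝ} (h : x ≤ y) : Real.arccos y ≤ Real.arccos x := by
  simp only [Real.arccos_eq_pi_div_two_sub_arcsin]
  linarith [Real.monotone_arcsin h]

lemma arccos_triangle (v w z : Fin 3 → ℝ) (hv : ∑ i, (v i)^2 = 1) (hw : ∑ i, (w i)^2 = 1)
    (hz : ∑ i, (z i)^2 = 1) :
    Real.arccos (∑ i, v i * z i) ≤ Real.arccos (∑ i, v i * w i)
      + Real.arccos (∑ i, w i * z i) := by
  set p := ∑ i, v i * w i with hp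
  set q := ∑ i, w i * z i with hq
  set r := ∑ i, v i * z i with hr
  have hp2 : p^2 ≤ 1 := by simpa [hv, hw] using cs3 v w
  have hq2 : q^2 ≤ 1 := by simpa [hw, hz] using cs3 w z
  have hp1 := abs_le.mp ((sq_le_one_iff_abs_le_one p).mp hp2)
  have hq1 := abs_le.mp ((sq_le_one_iff_abs_le_one q).mp hq2)
  by_cases hπ : Real.pi ≤ Real.arccos p + Real.arccos q
  · exact le_trans (Real.arccos_le_pi r) hπ
  push_neg at hπ
  have hkey := gram3 v w z hv hw hz
  have habs : |r - p*q| ≤ Real.sqrt ((1 - p^2) * (1 - q^2)) := Real.abs_le_sqrt hkey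
  have hsq : Real.sqrt ((1 - p^2) * (1 - q^2))
      = Real.sqrt (1 - p^2) * Real.sqrt (1 - q^2) := Real.sqrt_mul (by linarith) _
  have hge : p*q - Real.sqrt (1 - p^2) * Real.sqrt (1 - q^2) ≤ r := by
    have := (abs_le.mp habs).1
    rw [hsq] at this
    linarith
  have hcos : Real.cos (Real.arccos p + Real.arccos q)
      = p*q - Real.sqrt (1 - p^2) * Real.sqrt (1 - q^2) := by
    rw [Real.cos_add, Real.cos_arccos hp1.1 hp1.2, Real.cos_arccos hq1.1 hq1.2,
      Real.sin_arccos, Real.sin_arccos]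
  calc Real.arccos r ≤ Real.arccos (Real.cos (Real.arccos p + Real.arccos q)) := by
        apply arccos_le_arccos'
        rw [hcos]; exact hge
    _ = Real.arccos p + Real.arccos q := Real.arccos_cos
        (add_nonneg (Real.arccos_nonneg _) (Real.arccos_nonneg _)) hπ.le

lemma arccos_eq_two_arcsin (v w : Fin 3 → ℝ) (s : ℝ) (hs : 0 < s)
    (hv : ∑ i, (v i)^2 = s) (hw : ∑ i, (w i)^2 = s) :
    Real.arccos ((∑ i, v i * w i)/s)
      = 2 * Real.arcsin (Real.sqrt (∑ i, (v i - w i)^2) / (2*Real.sqrt s)) := by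
  set P := ∑ i, v i * w i with hPdef
  have hP2 : P^2 ≤ s^2 := by have := cs3 v w; rw [hv, hw] at this; nlinarith
  have hPabs : |P| ≤ s := by nlinarith [sq_abs P, abs_nonneg P]
  have hPle := abs_le.mp hPabs
  have hchord : ∑ i, (v i - w i)^2 = 2*s - 2*P := by
    simp only [Fin.sum_univ_three] at *
    linear_combination hv + hw + 2*hPdef
  set x := Real.sqrt (∑ i, (v i - w i)^2) / (2*Real.sqrt s) with hxdef
  have hx0 : 0 ≤ x := by positivity
  have hxsq : x^2 = (1 - P/s)/2 := by
    rw [hxdef, div_pow, Real.sq_sqrt (by positivity), mul_pow, Real.sq_sqrt hs.le, hchord]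
    field_simp
  have hps : -1 ≤ P/s := by
    rw [le_div_iff₀ hs]; linarith
  have hx1 : x ≤ 1 := by
    nlinarith [sq_nonneg (x-1)]
  have hcos : Real.cos (2 * Real.arcsin x) = P/s := by
    rw [Real.cos_two_mul, Real.cos_arcsin]
    rw [Real.sq_sqrt (by nlinarith : (0:ℝ) ≤ 1 - x^2)]
    rw [hxsq]; ring
  rw [← hcos, Real.arccos_cos (mul_nonneg (by norm_num) (Real.arcsin_nonneg.mpr hx0)) ?_]
  · have := Real.arcsin_le_pi_div_two x
    linarith

/-! ### The arcsin limit -/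

lemma tendsto_arcsin_seq (δ : ℝ) (hδ : 0 < δ) :
    Filter.Tendsto (fun n : ℕ => 2*(n:ℝ) * Real.arcsin (δ/(2*(n:ℝ))))
      Filter.atTop (nhds δ) := by
  have hd : HasDerivAt Real.arcsin 1 0 := by
    simpa using Real.hasDerivAt_arcsin (x := 0) (by norm_num) (by norm_num)
  have hslope := hasDerivAt_iff_tendsto_slope.mp hd
  have hy : Filter.Tendsto (fun n : ℕ => δ/(2*(n:ℝ))) Filter.atTop (nhdsWithin 0 {(0:ℝ)}ᶜ) := by
    rw [tendsto_nhdsWithin_iff]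
    constructor
    · apply Filter.Tendsto.div_atTop tendsto_const_nhds
      exact (tendsto_natCast_atTop_atTop (R := ℝ)).const_mul_atTop (by norm_num)
    · filter_upwards [Filter.eventually_gt_atTop 0] with n hn
      have h2n : (0:ℝ) < 2*(n:ℝ) := by positivity
      simp only [Set.mem_compl_iff, Set.mem_singleton_iff]
      positivity
  have hcomp := hslope.comp hy
  have heq : (fun n : ℕ => 2*(n:ℝ) * Real.arcsin (δ/(2*(n:ℝ))))
      =ᶠ[Filter.atTop] (fun n : ℕ => δ * (slope Real.arcsin 0 ∘ fun n : ℕ => δ/(2*(n:ℝ))) n) := by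
    filter_upwards [Filter.eventually_gt_atTop 0] with n hn
    have h2n : (0:ℝ) < 2*(n:ℝ) := by positivity
    simp only [Function.comp, slope_def_field, Real.arcsin_zero]
    field_simp [hδ.ne']
    ring
  rw [Filter.tendsto_congr' heq]
  have := hcomp.const_mul δ
  simpa using this

end AngleExpSkew

open AngleExpSkew
open NormedSpace (exp)

/-- For an axis-aligned box `B = Icc ωp ωq ⊂ ℝ³` with centre `ωc` and opposite corners
`ωp, ωq`, `t ≥ 0` and `u ≠ 0`: for every `ω ∈ B`, the angle between `exp([ωc t]×)·u` and
`exp([ω t]×)·u` is at most `α(B,t) = 0.5 ‖ωp t − ωq t‖₂`. -/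
theorem angle_exp_skew_le_half_diag (ωp ωq ωc : Fin 3 → ℝ) (hpq : ωp ≤ ωq)
    (hc : ωc = (1 / 2 : ℝ) • (ωp + ωq)) (t : ℝ) (ht : 0 ≤ t)
    (u : Fin 3 → ℝ) (hu : u ≠ 0)
    (ω : Fin 3 → ℝ) (hω : ω ∈ Set.Icc ωp ωq) :
    angle3 ((NormedSpace.exp (skew (t • ωc))).mulVec u)
        ((NormedSpace.exp (skew (t • ω))).mulVec u)
      ≤ (1 / 2 : ℝ) * Real.sqrt (∑ i, (ωp i * t - ωq i * t) ^ 2) := by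
  classical
  set a := t • ωc with ha
  set b := t • ω with hb
  set r2 := ∑ i, (u i)^2 with hr2def
  have hr2 : 0 < r2 := by
    obtain ⟨i, hi⟩ := Function.ne_iff.mp hu
    exact Finset.sum_pos' (fun j _ => sq_nonneg _)
      ⟨i, Finset.mem_univ i, (sq_nonneg _).lt_of_ne (Ne.symm (pow_ne_zero 2 hi))⟩
  have hsr2 : (0:ℝ) < Real.sqrt r2 := Real.sqrt_pos.mpr hr2
  set δ := Real.sqrt (∑ i, (a i - b i)^2) with hδdef
  -- `δ` is at most the right-hand side
  have hδle : δ ≤ (1 / 2 : ℝ) * Real.sqrt (∑ i, (ωp i * t - ωq i * t) ^ 2) := by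
    have h4 : (1/2 : ℝ) * Real.sqrt (∑ i, (ωp i * t - ωq i * t) ^ 2)
        = Real.sqrt ((1/4) * ∑ i, (ωp i * t - ωq i * t) ^ 2) := by
      rw [Real.sqrt_mul (by norm_num : (0:ℝ) ≤ 1/4),
        show Real.sqrt (1/4 : ℝ) = 1/2 by
          rw [show (1/4 : ℝ) = (1/2)^2 by norm_num, Real.sqrt_sq (by norm_num)]]
    rw [hδdef, h4, Finset.mul_sum]
    apply Real.sqrt_le_sqrt
    apply Finset.sum_le_sum
    intro i _
    have h1 : ωp i ≤ ω i := hω.1 i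
    have h2 : ω i ≤ ωq i := hω.2 i
    have hai : a i = t * ωc i := rfl
    have hbi : b i = t * ω i := rfl
    have hci : ωc i = (ωp i + ωq i)/2 := by
      rw [hc]; simp [Pi.smul_apply]; ring
    rw [hai, hbi, hci]
    nlinarith [mul_nonneg (mul_nonneg (sq_nonneg t) (sub_nonneg.mpr h1)) (sub_nonneg.mpr h2)]
  -- it suffices to bound the angle by δ
  have hδnn : 0 ≤ δ := hδdef ▸ Real.sqrt_nonneg _
  rcases eq_or_lt_of_le hδnn with hδ0 | hδpos
  · -- degenerate case : a = b
    have hsqrt0 : Real.sqrt (∑ i, (a i - b i)^2) = 0 := by rw [← hδdef, ← hδ0]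
    have hsum0 : ∑ i, (a i - b i)^2 = 0 :=
      (Real.sqrt_eq_zero (by positivity)).mp hsqrt0
    have hab : a = b := by
      funext i
      have hterm : (a i - b i)^2 = 0 := by
        have hnn : ∀ j ∈ Finset.univ, (0:ℝ) ≤ (a j - b j)^2 := fun j _ => sq_nonneg _
        exact (Finset.sum_eq_zero_iff_of_nonneg hnn).mp hsum0 i (Finset.mem_univ i)
      have h0 := pow_eq_zero_iff (two_ne_zero) |>.mp hterm
      linarith [sub_eq_zero.mp h0]
    rw [hab]
    have hval : angle3 ((exp (skew b)).mulVec u) ((exp (skew b)).mulVec u) = 0 := by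
      unfold angle3
      have hdot : ∑ i, (exp (skew b)).mulVec u i * (exp (skew b)).mulVec u i
          = r2 := by
        rw [hr2def, ← sum_sq_mulVec_exp_skew b u]
        exact Finset.sum_congr rfl fun i _ => (sq ((exp (skew b)).mulVec u i)).symm
      have hnrm : ∑ i, ((exp (skew b)).mulVec u i)^2 = r2 := sum_sq_mulVec_exp_skew b u
      rw [hdot, hnrm, Real.mul_self_sqrt hr2.le, div_self hr2.ne', Real.arccos_one]
    rw [hval]
    positivity
  · -- main case : δ > 0
    refine le_trans ?_ hδle
    have key : ∀ n : ℕ, 1 ≤ n →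
        angle3 ((exp (skew a)).mulVec u) ((exp (skew b)).mulVec u)
          ≤ 2*(n:ℝ)*Real.arcsin (δ/(2*(n:ℝ))) := by
      intro n hn
      have hn' : (0:ℝ) < (n:ℝ) := by exact_mod_cast hn
      set c : ℕ → (Fin 3 → ℝ) := fun k => a + ((k:ℝ)/(n:ℝ)) • (b - a) with hcdef
      set v : ℕ → (Fin 3 → ℝ) := fun k => (exp (skew (c k))).mulVec u with hvdef
      have hnorm : ∀ k, ∑ i, (v k i)^2 = r2 := fun k => sum_sq_mulVec_exp_skew (c k) u
      set w : ℕ → (Fin 3 → ℝ) := fun k => fun i => v k i / Real.sqrt r2 with hwdef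
      have hwnorm : ∀ k, ∑ i, (w k i)^2 = 1 := by
        intro k
        simp only [hwdef, div_pow, ← Finset.sum_div]
        rw [Real.sq_sqrt hr2.le, hnorm k, div_self hr2.ne']
      have hchordv : ∀ k, Real.sqrt (∑ i, (v (k+1) i - v k i)^2) ≤ δ/(n:ℝ) * Real.sqrt r2 := by
        intro k
        have hcb := chord_bound (c (k+1)) (c k) u
        have hstep : ∑ i, ((c (k+1)) i - (c k) i)^2
            = (1/(n:ℝ))^2 * ∑ i, (a i - b i)^2 := by
          simp only [hcdef, Pi.add_apply, Pi.smul_apply, Pi.sub_apply, smul_eq_mul,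
            Fin.sum_univ_three]
          push_cast
          field_simp
          ring
        have hrsq : Real.sqrt (∑ i, ((c (k+1)) i - (c k) i)^2) = δ/(n:ℝ) := by
          rw [hstep, Real.sqrt_mul (by positivity), Real.sqrt_sq (by positivity), hδdef]
          ring
        calc Real.sqrt (∑ i, (v (k+1) i - v k i)^2)
            ≤ Real.sqrt (∑ i, ((c (k+1)) i - (c k) i)^2) * Real.sqrt (∑ i, (u i)^2) := hcb
          _ = δ/(n:ℝ) * Real.sqrt r2 := by rw [hrsq, hr2def]
      set θ := 2 * Real.arcsin (δ/(2*(n:ℝ))) with hθdef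
      have hθ0 : 0 ≤ θ := by
        rw [hθdef]
        have := Real.arcsin_nonneg.mpr (le_of_lt (by positivity : (0:ℝ) < δ/(2*(n:ℝ))))
        linarith
      have hstepangle : ∀ k, Real.arccos (∑ i, w k i * w (k+1) i) ≤ θ := by
        intro k
        have h2a := arccos_eq_two_arcsin (w k) (w (k+1)) 1 one_pos (hwnorm k) (hwnorm (k+1))
        rw [div_one] at h2a
        rw [h2a, hθdef]
        have hsumw : ∑ i, (w k i - w (k+1) i)^2
            = (∑ i, (v (k+1) i - v k i)^2)/r2 := by
          simp only [hwdef, div_sub_div_same, div_pow, ← Finset.sum_div]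
          rw [Real.sq_sqrt hr2.le]
          congr 1
          exact Finset.sum_congr rfl fun i _ => by ring
        have hchw : Real.sqrt (∑ i, (w k i - w (k+1) i)^2) ≤ δ/(n:ℝ) := by
          rw [hsumw, Real.sqrt_div (by positivity) r2]
          rw [div_le_iff₀ hsr2]
          exact hchordv k
        have harg : Real.sqrt (∑ i, (w k i - w (k+1) i)^2) / (2*Real.sqrt 1)
            ≤ δ/(2*(n:ℝ)) := by
          rw [Real.sqrt_one, mul_one]
          rw [div_le_iff₀ (by norm_num : (0:ℝ) < 2)]
          calc Real.sqrt (∑ i, (w k i - w (k+1) i)^2) ≤ δ/(n:ℝ) := hchw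
            _ = δ/(2*(n:ℝ)) * 2 := by field_simp
        have := Real.monotone_arcsin harg
        linarith
      have htri : ∀ m : ℕ, Real.arccos (∑ i, w 0 i * w m i) ≤ (m:ℝ) * θ := by
        intro m
        induction m with
        | zero =>
          have h1 : ∑ i, w 0 i * w 0 i = 1 := by
            rw [← hwnorm 0]
            exact Finset.sum_congr rfl fun i _ => (sq _).symm
          simp [h1, Real.arccos_one]
        | succ m ih =>
          have htr := arccos_triangle (w 0) (w m) (w (m+1)) (hwnorm 0) (hwnorm m)
            (hwnorm (m+1))
          have hst := hstepangle m
          push_cast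
          linarith
      have hc0 : c 0 = a := by
        simp [hcdef]
      have hcn : c n = b := by
        simp only [hcdef]
        rw [div_self hn'.ne', one_smul, add_sub_cancel]
      have hangle : angle3 (v 0) (v n) = Real.arccos (∑ i, w 0 i * w n i) := by
        unfold angle3
        congr 1
        rw [hnorm 0, hnorm n, Real.mul_self_sqrt hr2.le]
        have : ∑ i, w 0 i * w n i = (∑ i, v 0 i * v n i)/r2 := by
          simp only [hwdef, div_mul_div_comm, ← Finset.sum_div, Real.mul_self_sqrt hr2.le]
        rw [this]
      have hgoal : angle3 ((exp (skew a)).mulVec u) ((exp (skew b)).mulVec u)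
          = angle3 (v 0) (v n) := by
        rw [hvdef]
        simp only [hc0, hcn]
      rw [hgoal, hangle]
      calc Real.arccos (∑ i, w 0 i * w n i) ≤ (n:ℝ) * θ := htri n
        _ = 2*(n:ℝ)*Real.arcsin (δ/(2*(n:ℝ))) := by rw [hθdef]; ring
    refine ge_of_tendsto (tendsto_arcsin_seq δ hδpos) ?_
    filter_upwards [Filter.eventually_ge_atTop 1] with n hn
    exact key n hn
end

section
/- For every point x ∈ ℝ² and every ω ∈ B, H_c(x; ω) ≤ H̄_c(x; B). In particular H̄_c(x; B) ≥ max over ω ∈ B of H_c(x; ω). -/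
/-- Lemma 1 (inequality): for warped-event positions `p i ω` contained in the discs
`D_i = {y : ‖y − c i‖ ≤ r i}` for all `ω ∈ B`, and a nonincreasing kernel `δ`, the
continuous event image `H_c(x;ω) = ∑ i, δ ‖x − p i ω‖` is bounded above, for every
`x ∈ ℝ²` and every `ω ∈ B`, by `H̄_c(x;B) = ∑ i, δ (max (‖x − c i‖ − r i) 0)`. -/
theorem continuous_event_image_le_upper_bound
    {N : ℕ} (hN : 1 ≤ N) {Ω : Type*} (B : Set Ω)
    (c : Fin N → EuclideanSpace ℝ (Fin 2)) (r : Fin N → ℝ) (hr : ∀ i, 0 ≤ r i)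
    (δ : ℝ → ℝ) (hδ : Antitone δ)
    (p : Fin N → Ω → EuclideanSpace ℝ (Fin 2))
    (hdisc : ∀ i, ∀ ω ∈ B, ‖p i ω - c i‖ ≤ r i)
    (x : EuclideanSpace ℝ (Fin 2)) (ω : Ω) (hω : ω ∈ B) :
    (∑ i, δ ‖x - p i ω‖) ≤ ∑ i, δ (max (‖x - c i‖ - r i) 0) := by
  apply Finset.sum_le_sum
  intro i _
  apply hδ
  apply max_le
  · have h1 : ‖x - c i‖ ≤ ‖x - p i ω‖ + ‖p i ω - c i‖ := norm_sub_le_norm_sub_add_norm_sub x (p i ω) (c i)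
    have h2 := hdisc i ω hω
    linarith
  · exact norm_nonneg _
end

section
/- Let M ∈ {0,1}^{N×K} with K ≥ 2 and with every row containing at least one 1, and suppose there are two distinct column indices k₀ ≠ η with M_{i,k₀} ≤ M_{i,η} for all i (column k₀ is dominated by column η). Let M⁻ be the N×(K−1) matrix obtained from M by deleting column k₀. Then IQP(M⁻) = IQP(M). -/
/-- The optimal value of the integer quadratic program `IQP(M)`:
maximize `∑ k, (∑ i, Z i k * M i k)²` over 0-1 matrices `Z` with `Z i k ≤ M i k` and
`∑ k, Z i k = 1` for every row `i`. -/
noncomputable def IQP {N K : ℕ} (M : Fin N → Fin K → ℕ) : ℕ :=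
  sSup {v : ℕ | ∃ Z : Fin N → Fin K → ℕ, (∀ i k, Z i k ≤ M i k) ∧
    (∀ i, ∑ k, Z i k = 1) ∧ v = ∑ k, (∑ i, Z i k * M i k) ^ 2}

/-- Any feasible value of the IQP is bounded by `K * N²`. -/
lemma IQP_bddAbove {N K : ℕ} (M : Fin N → Fin K → ℕ) (hM : ∀ i k, M i k ≤ 1) :
    BddAbove {v : ℕ | ∃ Z : Fin N → Fin K → ℕ, (∀ i k, Z i k ≤ M i k) ∧
      (∀ i, ∑ k, Z i k = 1) ∧ v = ∑ k, (∑ i, Z i k * M i k) ^ 2} := by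
  refine ⟨K * N ^ 2, ?_⟩
  rintro v ⟨Z, hZ, hrow, rfl⟩
  have h : ∀ k : Fin K, (∑ i, Z i k * M i k) ^ 2 ≤ N ^ 2 := by
    intro k
    apply Nat.pow_le_pow_left
    have h1 : ∑ i, Z i k * M i k ≤ ∑ _i : Fin N, 1 :=
      Finset.sum_le_sum (fun i _ => by have := hZ i k; have := hM i k; nlinarith)
    simpa using h1
  have h2 : ∑ k, (∑ i, Z i k * M i k) ^ 2 ≤ ∑ _k : Fin K, N ^ 2 :=
    Finset.sum_le_sum (fun k _ => h k)
  simpa using h2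

/-- Lemma 3: let `M ∈ {0,1}^{N×(K+1)}` (so the number of columns is `K + 1 ≥ 2`) have
every row containing at least one `1`, and suppose column `k₀` is dominated by a distinct
column `η` (i.e. `M i k₀ ≤ M i η` for all `i`). Then deleting column `k₀` does not change
the optimal value of the IQP. -/
theorem IQP_delete_dominated_column {N K : ℕ} (hK : 1 ≤ K)
    (M : Fin N → Fin (K + 1) → ℕ) (hM : ∀ i k, M i k ≤ 1)
    (hrow : ∀ i, ∃ k, M i k = 1)
    (k₀ η : Fin (K + 1)) (hne : k₀ ≠ η) (hdom : ∀ i, M i k₀ ≤ M i η) :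
    IQP (fun i k => M i (k₀.succAbove k)) = IQP M := by
  classical
  set S : Set ℕ := {v : ℕ | ∃ Z : Fin N → Fin (K + 1) → ℕ, (∀ i k, Z i k ≤ M i k) ∧
    (∀ i, ∑ k, Z i k = 1) ∧ v = ∑ k, (∑ i, Z i k * M i k) ^ 2} with hS
  set T : Set ℕ := {v : ℕ | ∃ Z : Fin N → Fin K → ℕ,
    (∀ i k, Z i k ≤ M i (k₀.succAbove k)) ∧
    (∀ i, ∑ k, Z i k = 1) ∧ v = ∑ k, (∑ i, Z i k * M i (k₀.succAbove k)) ^ 2} with hT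
  have hSbdd : BddAbove S := IQP_bddAbove M hM
  have hTbdd : BddAbove T := IQP_bddAbove _ (fun i k => hM i _)
  -- preimage of η under succAbove
  obtain ⟨j₀, hj₀⟩ := Fin.exists_succAbove_eq hne.symm
  have hsuccη : ∀ j : Fin K, k₀.succAbove j = η ↔ j = j₀ := by
    intro j
    constructor
    · intro h; exact Fin.succAbove_right_injective (h.trans hj₀.symm)
    · rintro rfl; exact hj₀
  -- S is nonempty
  have hSne : S.Nonempty := by
    refine ⟨_, fun i k => if k = Classical.choose (hrow i) then 1 else 0, ?_, ?_, rfl⟩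
    · intro i k
      by_cases h : k = Classical.choose (hrow i)
      · subst h; simp [Classical.choose_spec (hrow i)]
      · simp [h]
    · intro i; simp
  -- T is nonempty
  have hTne : T.Nonempty := by
    have hc : ∀ i, ∃ j : Fin K, M i (k₀.succAbove j) = 1 := by
      intro i
      obtain ⟨c, hcc⟩ := hrow i
      by_cases h : c = k₀
      · refine ⟨j₀, ?_⟩
        rw [hj₀]
        have h1 : (1 : ℕ) ≤ M i η := by rw [← hcc, h]; exact hdom i
        have h2 := hM i η
        omega
      · obtain ⟨j, hj⟩ := Fin.exists_succAbove_eq h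
        exact ⟨j, by rw [hj]; exact hcc⟩
    refine ⟨_, fun i j => if j = Classical.choose (hc i) then 1 else 0, ?_, ?_, rfl⟩
    · intro i j
      by_cases h : j = Classical.choose (hc i)
      · subst h; simp [Classical.choose_spec (hc i)]
      · simp [h]
    · intro i; simp
  show sSup T = sSup S
  apply le_antisymm
  · -- sSup T ≤ sSup S : extend Z by a zero column at k₀
    apply csSup_le hTne
    rintro v ⟨Z, hZ, hrowZ, rfl⟩
    set Z' : Fin N → Fin (K + 1) → ℕ := fun i => Fin.insertNth k₀ 0 (Z i) with hZ'
    refine le_csSup_of_le hSbdd ⟨Z', ?_, ?_, rfl⟩ ?_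
    · intro i k
      rcases eq_or_ne k k₀ with rfl | h
      · simp [hZ', Fin.insertNth_apply_same]
      · obtain ⟨j, rfl⟩ := Fin.exists_succAbove_eq h
        simpa [hZ', Fin.insertNth_apply_succAbove] using hZ i j
    · intro i
      rw [Fin.sum_univ_succAbove (fun k => Z' i k) k₀]
      simp [hZ', Fin.insertNth_apply_same, Fin.insertNth_apply_succAbove, hrowZ i]
    · apply le_of_eq
      rw [Fin.sum_univ_succAbove (fun k => (∑ i, Z' i k * M i k) ^ 2) k₀]
      simp [hZ', Fin.insertNth_apply_same, Fin.insertNth_apply_succAbove]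
  · -- sSup S ≤ sSup T : move the mass of column k₀ to column η
    apply csSup_le hSne
    rintro v ⟨Z, hZ, hrowZ, rfl⟩
    -- each row has total mass ≤ 1 across any two distinct columns
    have hpair : ∀ i, Z i η + Z i k₀ ≤ 1 := by
      intro i
      have hsub : ({η, k₀} : Finset (Fin (K + 1))) ⊆ Finset.univ := Finset.subset_univ _
      have h1 : ∑ k ∈ ({η, k₀} : Finset (Fin (K + 1))), Z i k ≤ ∑ k, Z i k :=
        Finset.sum_le_sum_of_subset hsub
      rw [Finset.sum_pair (Ne.symm hne)] at h1
      have := hrowZ i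
      omega
    set Z' : Fin N → Fin K → ℕ := fun i j =>
      if k₀.succAbove j = η then Z i η + Z i k₀ else Z i (k₀.succAbove j) with hZ'
    refine le_csSup_of_le hTbdd ⟨Z', ?_, ?_, rfl⟩ ?_
    · intro i j
      simp only [hZ']
      by_cases h : k₀.succAbove j = η
      · rw [if_pos h, h]
        have := hZ i η; have := hZ i k₀; have := hdom i; have := hpair i; omega
      · rw [if_neg h]; exact hZ i _
    · intro i
      have hsum : ∑ j, Z' i j =
          Z' i j₀ + ∑ j ∈ Finset.univ.erase j₀, Z' i j :=
        (Finset.add_sum_erase _ _ (Finset.mem_univ j₀)).symm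
      have hsum2 : ∑ k, Z i k
          = Z i k₀ + (Z i η + ∑ j ∈ Finset.univ.erase j₀, Z i (k₀.succAbove j)) := by
        rw [Fin.sum_univ_succAbove (Z i) k₀, ← Finset.add_sum_erase _ _ (Finset.mem_univ j₀), hj₀]
      have he : ∀ j ∈ Finset.univ.erase j₀, Z' i j = Z i (k₀.succAbove j) := by
        intro j hj
        have hjne : j ≠ j₀ := (Finset.mem_erase.mp hj).1
        rw [hZ']; simp only [if_neg (fun h => hjne ((hsuccη j).mp h))]
      rw [hsum, Finset.sum_congr rfl he]
      have h0 : Z' i j₀ = Z i η + Z i k₀ := by rw [hZ']; simp [hj₀]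
      have h1 := hrowZ i
      rw [hsum2] at h1
      omega
    · -- value does not decrease
      set b : Fin (K + 1) → ℕ := fun k => ∑ i, Z i k * M i k with hb
      have hZMk₀ : ∀ i, Z i k₀ * M i η = Z i k₀ * M i k₀ := by
        intro i
        have h1 := hZ i k₀; have h2 := hM i k₀; have h3 := hdom i; have h4 := hM i η
        rcases Nat.le_one_iff_eq_zero_or_eq_one.mp (h1.trans h2) with h | h <;> rw [h] <;> omega
      have hv : ∑ k, b k ^ 2
          = b k₀ ^ 2 + (b η ^ 2 + ∑ j ∈ Finset.univ.erase j₀, b (k₀.succAbove j) ^ 2) := by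
        rw [Fin.sum_univ_succAbove (fun k => b k ^ 2) k₀,
          ← Finset.add_sum_erase _ _ (Finset.mem_univ j₀), hj₀]
      have hw : ∑ j, (∑ i, Z' i j * M i (k₀.succAbove j)) ^ 2 =
          (b η + b k₀) ^ 2 + ∑ j ∈ Finset.univ.erase j₀, b (k₀.succAbove j) ^ 2 := by
        rw [← Finset.add_sum_erase _ _ (Finset.mem_univ j₀)]
        congr 1
        · rw [hj₀]
          congr 1
          have hzz : ∀ i, Z' i j₀ = Z i η + Z i k₀ := by
            intro i; rw [hZ']; simp [hj₀]
          calc ∑ i, Z' i j₀ * M i η = ∑ i, (Z i η * M i η + Z i k₀ * M i k₀) := by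
                apply Finset.sum_congr rfl; intro i _
                rw [hzz i, add_mul, hZMk₀ i]
            _ = b η + b k₀ := by rw [Finset.sum_add_distrib]
        · apply Finset.sum_congr rfl
          intro j hj
          have hjne : j ≠ j₀ := (Finset.mem_erase.mp hj).1
          have hzz : ∀ i, Z' i j = Z i (k₀.succAbove j) := by
            intro i; rw [hZ']; simp only [if_neg (fun h => hjne ((hsuccη j).mp h))]
          simp only [hzz]
          rfl
      rw [hw]
      calc ∑ k, b k ^ 2
          = b k₀ ^ 2 + (b η ^ 2 + ∑ j ∈ Finset.univ.erase j₀, b (k₀.succAbove j) ^ 2) := hv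
        _ ≤ (b η + b k₀) ^ 2 + ∑ j ∈ Finset.univ.erase j₀, b (k₀.succAbove j) ^ 2 := by
            have hsq : (b η + b k₀) ^ 2 = b η ^ 2 + 2 * (b η * b k₀) + b k₀ ^ 2 := by ring
            omega
end

section
/- Let d_1 ≥ d_2 ≥ … ≥ d_K be nonnegative integers with ∑_{k=1}^K d_k ≥ N, and let γ ∈ {0,1,…,K} be the largest index such that ∑_{k=1}^{γ} d_k < N. Then the maximum of ∑_{k=1}^K z_k² over integer vectors z with 0 ≤ z_k ≤ d_k for all k and ∑_{k=1}^K z_k = N equals ∑_{k=1}^{γ} d_k² + (N − ∑_{k=1}^{γ} d_k)². Consequently, for a 0-1 matrix M ∈ {0,1}^{N×K} with column sums Δ_k = ∑_i M_{i,k} sorted decreasingly as Δ_{(1)} ≥ … ≥ Δ_{(K)} and ∑_k Δ_k ≥ N, the optimal value R-IQP(M) equals ∑_{k=1}^{γ} Δ_{(k)}² + (N − ∑_{k=1}^{γ} Δ_{(k)})², where γ is the largest index with ∑_{k=1}^{γ} Δ_{(k)} < N. -/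
/-- The optimal value of the relaxed program `R-IQP(M)`. -/
noncomputable def RIQP {N K : ℕ} (M : Fin N → Fin K → ℕ) : ℕ :=
  sSup {v : ℕ | ∃ Z : Fin N → Fin K → ℕ, (∀ i k, Z i k ≤ M i k) ∧
    (∑ k, ∑ i, Z i k) = N ∧ v = ∑ k, (∑ i, Z i k * M i k) ^ 2}

open Finset

private lemma sum_mono_range (d : ℕ → ℕ) {a b : ℕ} (h : a ≤ b) :
    ∑ k ∈ range a, d k ≤ ∑ k ∈ range b, d k :=
  Finset.sum_le_sum_of_subset (Finset.range_subset_range.mpr h)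

private lemma split2 (K : ℕ) (g : ℕ → ℕ) {k l : ℕ} (hk : k < K) (hl : l < K) (hkl : k ≠ l) :
    ∑ j ∈ range K, g j = g k + g l + ∑ j ∈ ((range K).erase k).erase l, g j := by
  rw [← Finset.add_sum_erase _ g (mem_range.mpr hk),
    ← Finset.add_sum_erase _ g (Finset.mem_erase.mpr ⟨Ne.symm hkl, mem_range.mpr hl⟩)]
  ring

private lemma phi_le (K N : ℕ) (z : ℕ → ℕ) (hsum : ∑ k ∈ range K, z k = N) :
    ∑ k ∈ range K, z k * (K - k) ≤ K * N := by
  calc ∑ k ∈ range K, z k * (K - k) ≤ ∑ k ∈ range K, z k * K :=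
        Finset.sum_le_sum fun k _ => Nat.mul_le_mul_left _ (Nat.sub_le _ _)
    _ = K * N := by rw [← Finset.sum_mul, hsum, Nat.mul_comm]

private lemma move (K N : ℕ) (d z : ℕ → ℕ)
    (hd : ∀ k₁ k₂, k₁ ≤ k₂ → k₂ < K → d k₂ ≤ d k₁)
    (hz : ∀ k, k < K → z k ≤ d k) (hsum : ∑ k ∈ range K, z k = N)
    (k l : ℕ) (hkl : k < l) (hlK : l < K) (hk : z k < d k) (hl : 0 < z l) :
    ∃ z' : ℕ → ℕ, (∀ j, j < K → z' j ≤ d j) ∧ (∑ j ∈ range K, z' j = N) ∧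
      (∑ j ∈ range K, z j ^ 2 ≤ ∑ j ∈ range K, z' j ^ 2) ∧
      (∑ j ∈ range K, z j * (K - j)) + 1 ≤ ∑ j ∈ range K, z' j * (K - j) := by
  have hkK : k < K := hkl.trans hlK
  have t_def : ∃ t : ℕ, t = min (d k - z k) (z l) := ⟨_, rfl⟩
  obtain ⟨t, ht⟩ := t_def
  have ht1 : 1 ≤ t := ht ▸ le_min (by omega) hl
  have htl : t ≤ z l := ht ▸ min_le_right _ _
  have htk : z k + t ≤ d k := by have h := min_le_left (d k - z k) (z l); rw [← ht] at h; omega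
  have hzl_dk : z l ≤ d k := (hz l hlK).trans (hd k l hkl.le hlK)
  have hble : z l ≤ z k + t := by
    rcases le_total (d k - z k) (z l) with h | h
    · rw [ht, min_eq_left h]; omega
    · rw [ht, min_eq_right h]; omega
  clear ht
  obtain ⟨z', hz'⟩ : ∃ z' : ℕ → ℕ, z' = fun j => if j = k then z k + t else if j = l then z l - t else z j := ⟨_, rfl⟩
  have hzk' : z' k = z k + t := by simp [hz']
  have hzl' : z' l = z l - t := by
    simp only [hz']; rw [if_neg (show ¬ l = k by omega)]; simp
  have hrest : ∀ j ∈ ((range K).erase k).erase l, z' j = z j := by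
    intro j hj
    obtain ⟨hjl, hjk, _⟩ := by simpa [Finset.mem_erase] using hj
    simp [hz', hjl, hjk]
  have hne : k ≠ l := by omega
  refine ⟨z', ?_, ?_, ?_, ?_⟩
  · intro j hjK
    by_cases h1 : j = k
    · subst h1; omega
    by_cases h2 : j = l
    · rw [h2, hzl']; exact (Nat.sub_le _ _).trans (hz l hlK)
    · simpa [hz', h1, h2] using hz j hjK
  · have e1 := split2 K z' hkK hlK hne
    have e2 := split2 K z hkK hlK hne
    have hR : ∑ j ∈ ((range K).erase k).erase l, z' j
        = ∑ j ∈ ((range K).erase k).erase l, z j :=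
      Finset.sum_congr rfl (fun j hj => hrest j hj)
    omega
  · have e1 := split2 K (fun j => z' j ^ 2) hkK hlK hne
    have e2 := split2 K (fun j => z j ^ 2) hkK hlK hne
    beta_reduce at e1 e2
    have hR : ∑ j ∈ ((range K).erase k).erase l, z' j ^ 2
        = ∑ j ∈ ((range K).erase k).erase l, z j ^ 2 :=
      Finset.sum_congr rfl (fun j hj => by rw [hrest j hj])
    have hkey : z k ^ 2 + z l ^ 2 ≤ z' k ^ 2 + z' l ^ 2 := by
      rw [hzk', hzl']
      have hc : z l - t + t = z l := by omega
      have hca : z l - t ≤ z k := by omega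
      nlinarith [hc, hca]
    omega
  · have e1 := split2 K (fun j => z' j * (K - j)) hkK hlK hne
    have e2 := split2 K (fun j => z j * (K - j)) hkK hlK hne
    beta_reduce at e1 e2
    have hR : ∑ j ∈ ((range K).erase k).erase l, z' j * (K - j)
        = ∑ j ∈ ((range K).erase k).erase l, z j * (K - j) :=
      Finset.sum_congr rfl (fun j hj => by rw [hrest j hj])
    have hkey : z k * (K - k) + z l * (K - l) + 1 ≤ z' k * (K - k) + z' l * (K - l) := by
      rw [hzk', hzl']
      have hc : z l - t + t = z l := by omega
      have hv : (K - l) + 1 ≤ K - k := by omega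
      have h2 : t * (K - l) + t ≤ t * (K - k) := by
        calc t * (K - l) + t = t * ((K - l) + 1) := by ring
          _ ≤ t * (K - k) := Nat.mul_le_mul_left t hv
      nlinarith [hc, h2]
    omega

private lemma terminal_eval (N : ℕ) (d : ℕ → ℕ) (γ m zm : ℕ)
    (hγ : ∑ k ∈ range γ, d k < N)
    (hS1 : N ≤ ∑ k ∈ range (γ + 1), d k)
    (hNm : (∑ k ∈ range m, d k) + zm = N)
    (hzm : 0 < zm → zm < d m) :
    (∑ k ∈ range m, d k ^ 2) + zm ^ 2
      = (∑ k ∈ range γ, d k ^ 2) + (N - ∑ k ∈ range γ, d k) ^ 2 := by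
  have hsγ := Finset.sum_range_succ d γ
  rcases Nat.eq_zero_or_pos zm with h0 | hpos
  · subst h0
    -- N = S m, show γ < m and squeeze
    have hγm : γ < m := by
      by_contra h
      have := sum_mono_range d (by omega : m ≤ γ)
      omega
    have hSγ1 : ∑ k ∈ range (γ + 1), d k = N :=
      le_antisymm (by have := sum_mono_range d (by omega : γ + 1 ≤ m); omega) hS1
    have hdγ : d γ = N - ∑ k ∈ range γ, d k := by omega
    have hzero : ∀ j, γ + 1 ≤ j → j < m → d j = 0 := by
      intro j hj1 hj2
      have h1 := sum_mono_range d hj1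
      have h2 := sum_mono_range d (by omega : j + 1 ≤ m)
      have h3 := Finset.sum_range_succ d j
      omega
    have hsplit := Finset.sum_range_add_sum_Ico (fun k => d k ^ 2) (by omega : γ + 1 ≤ m)
    have hz2 : ∑ k ∈ Finset.Ico (γ + 1) m, d k ^ 2 = 0 :=
      Finset.sum_eq_zero fun j hj => by
        rw [Finset.mem_Ico] at hj
        rw [hzero j hj.1 hj.2]; ring
    have hsq := Finset.sum_range_succ (fun k => d k ^ 2) γ
    rw [← hsplit, hz2, hsq, hdγ]
    omega
  · -- zm < d m : show m = γ
    have hlt := hzm hpos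
    have hSm : ∑ k ∈ range m, d k < N := by omega
    have hmγ : m = γ := by
      by_contra h
      rcases Nat.lt_or_ge m γ with hc | hc
      · have h1 := sum_mono_range d (by omega : m + 1 ≤ γ)
        have h2 := Finset.sum_range_succ d m
        omega
      · have h1 := sum_mono_range d (by omega : γ + 1 ≤ m)
        omega
    subst hmγ
    have : zm = N - ∑ k ∈ range m, d k := by omega
    rw [this]

private lemma terminal (K N : ℕ) (d z : ℕ → ℕ)
    (γ : ℕ) (hγK : γ < K)
    (hγ : ∑ k ∈ range γ, d k < N)
    (hS1 : N ≤ ∑ k ∈ range (γ + 1), d k)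
    (hz : ∀ k, k < K → z k ≤ d k) (hsum : ∑ k ∈ range K, z k = N)
    (hterm : ∀ k l, k < l → l < K → z k < d k → z l = 0) :
    ∑ k ∈ range K, z k ^ 2
      = (∑ k ∈ range γ, d k ^ 2) + (N - ∑ k ∈ range γ, d k) ^ 2 := by
  by_cases hex : ∃ k, k < K ∧ z k < d k
  · classical
    set m := Nat.find hex with hm
    obtain ⟨hmK, hmlt⟩ := Nat.find_spec hex
    have hmin : ∀ j, j < m → z j = d j := by
      intro j hj
      have := Nat.find_min hex hj
      have hjK : j < K := by omega
      have := hz j hjK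
      omega
    have hzero : ∀ l, m < l → l < K → z l = 0 := fun l h1 h2 => hterm m l h1 h2 hmlt
    have hsum1 : ∑ k ∈ range K, z k
        = (∑ k ∈ range m, z k) + z m + ∑ k ∈ Finset.Ico (m + 1) K, z k := by
      rw [← Finset.sum_range_add_sum_Ico z (by omega : m + 1 ≤ K), Finset.sum_range_succ]
    have hz0 : ∑ k ∈ Finset.Ico (m + 1) K, z k = 0 :=
      Finset.sum_eq_zero fun j hj => by
        rw [Finset.mem_Ico] at hj; exact hzero j (by omega) hj.2
    have hsum2 : ∑ k ∈ range K, z k ^ 2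
        = (∑ k ∈ range m, z k ^ 2) + z m ^ 2 + ∑ k ∈ Finset.Ico (m + 1) K, z k ^ 2 := by
      rw [← Finset.sum_range_add_sum_Ico (fun k => z k ^ 2) (by omega : m + 1 ≤ K),
        Finset.sum_range_succ]
    have hz02 : ∑ k ∈ Finset.Ico (m + 1) K, z k ^ 2 =  0 :=
      Finset.sum_eq_zero fun j hj => by
        rw [Finset.mem_Ico] at hj; rw [hzero j (by omega) hj.2]; ring
    have hzd : ∑ k ∈ range m, z k = ∑ k ∈ range m, d k :=
      Finset.sum_congr rfl fun j hj => hmin j (Finset.mem_range.mp hj)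
    have hzd2 : ∑ k ∈ range m, z k ^ 2 = ∑ k ∈ range m, d k ^ 2 :=
      Finset.sum_congr rfl fun j hj => by rw [hmin j (Finset.mem_range.mp hj)]
    rw [hsum2, hz02, hzd2]
    have : (∑ k ∈ range m, d k) + z m = N := by omega
    have := terminal_eval N d γ m (z m) hγ hS1 this (fun _ => hmlt)
    omega
  · push_neg at hex
    have hzd : ∀ j, j < K → z j = d j := fun j hj => le_antisymm (hz j hj) (hex j hj)
    have hzd1 : ∑ k ∈ range K, z k = ∑ k ∈ range K, d k :=
      Finset.sum_congr rfl fun j hj => hzd j (Finset.mem_range.mp hj)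
    have hzd2 : ∑ k ∈ range K, z k ^ 2 = ∑ k ∈ range K, d k ^ 2 :=
      Finset.sum_congr rfl fun j hj => by rw [hzd j (Finset.mem_range.mp hj)]
    rw [hzd2]
    have hNm : (∑ k ∈ range K, d k) + 0 = N := by omega
    have := terminal_eval N d γ K 0 hγ hS1 hNm (fun h => absurd h (lt_irrefl 0))
    omega

private lemma key (K N : ℕ) (d : ℕ → ℕ)
    (hd : ∀ k₁ k₂, k₁ ≤ k₂ → k₂ < K → d k₂ ≤ d k₁)
    (γ : ℕ) (hγK : γ < K)
    (hγ : ∑ k ∈ range γ, d k < N)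
    (hS1 : N ≤ ∑ k ∈ range (γ + 1), d k) :
    ∀ (m : ℕ) (z : ℕ → ℕ), (∀ k, k < K → z k ≤ d k) → (∑ k ∈ range K, z k) = N →
      K * N ≤ (∑ k ∈ range K, z k * (K - k)) + m →
      ∑ k ∈ range K, z k ^ 2
        ≤ (∑ k ∈ range γ, d k ^ 2) + (N - ∑ k ∈ range γ, d k) ^ 2 := by
  intro m
  induction m with
  | zero =>
    intro z hz hsum hΦ
    by_cases hmov : ∃ k, ∃ l, k < l ∧ l < K ∧ z k < d k ∧ 0 < z l
    · obtain ⟨k, l, hkl, hlK, hk, hl⟩ := hmov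
      obtain ⟨z', _, hsum', _, hΦ'⟩ := move K N d z hd hz hsum k l hkl hlK hk hl
      have := phi_le K N z' hsum'
      omega
    · push_neg at hmov
      exact le_of_eq (terminal K N d z γ hγK hγ hS1 hz hsum
        (fun k l h1 h2 h3 => by
          by_contra h
          exact absurd (hmov k l h1 h2 h3) (by omega)))
  | succ m ih =>
    intro z hz hsum hΦ
    by_cases hmov : ∃ k, ∃ l, k < l ∧ l < K ∧ z k < d k ∧ 0 < z l
    · obtain ⟨k, l, hkl, hlK, hk, hl⟩ := hmov
      obtain ⟨z', hz', hsum', hsq', hΦ'⟩ := move K N d z hd hz hsum k l hkl hlK hk hl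
      exact hsq'.trans (ih z' hz' hsum' (by omega))
    · push_neg at hmov
      exact le_of_eq (terminal K N d z γ hγK hγ hS1 hz hsum
        (fun k l h1 h2 h3 => by
          by_contra h
          exact absurd (hmov k l h1 h2 h3) (by omega)))

private lemma part1 (K N : ℕ) (d : ℕ → ℕ)
    (hd : ∀ k₁ k₂, k₁ ≤ k₂ → k₂ < K → d k₂ ≤ d k₁)
    (hN : N ≤ ∑ k ∈ range K, d k)
    (γ : ℕ) (hγK : γ ≤ K) (hγ : (∑ k ∈ range γ, d k) < N)
    (hmax : ∀ γ', γ' ≤ K → (∑ k ∈ range γ', d k) < N → γ' ≤ γ) :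
    sSup {v : ℕ | ∃ z : ℕ → ℕ, (∀ k < K, z k ≤ d k) ∧
        (∑ k ∈ range K, z k) = N ∧ v = ∑ k ∈ range K, (z k) ^ 2}
      = (∑ k ∈ range γ, (d k) ^ 2) + (N - ∑ k ∈ range γ, d k) ^ 2 := by
  have hγK' : γ < K := by
    rcases Nat.lt_or_ge γ K with h | h
    · exact h
    · exfalso; have : γ = K := by omega
      subst this; omega
  have hS1 : N ≤ ∑ k ∈ range (γ + 1), d k := by
    by_contra h
    have := hmax (γ + 1) (by omega) (by omega)
    omega
  set S := ∑ k ∈ range γ, d k with hS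
  -- greedy witness
  set zg : ℕ → ℕ := fun k => if k < γ then d k else if k = γ then N - S else 0 with hzg
  have hsγ := Finset.sum_range_succ d γ
  have hzg_feas : ∀ k, k < K → zg k ≤ d k := by
    intro k hk
    by_cases h1 : k < γ
    · simp [hzg, h1]
    by_cases h2 : k = γ
    · subst h2; simp [hzg, h1]; omega
    · simp [hzg, h1, h2]
  have hzg_sum : ∑ k ∈ range K, zg k = N := by
    rw [← Finset.sum_range_add_sum_Ico zg (le_of_lt hγK'),
      Finset.sum_eq_sum_Ico_succ_bot hγK' zg]
    have h1 : ∑ k ∈ range γ, zg k = S := Finset.sum_congr rfl fun j hj => by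
      simp [hzg, Finset.mem_range.mp hj]
    have h2 : zg γ = N - S := by simp [hzg]
    have h3 : ∑ k ∈ Finset.Ico (γ + 1) K, zg k = 0 := Finset.sum_eq_zero fun j hj => by
      rw [Finset.mem_Ico] at hj
      simp only [hzg]
      rw [if_neg (by omega : ¬ j < γ), if_neg (by omega : ¬ j = γ)]
    rw [h1, h2, h3]
    omega
  have hzg_val : ∑ k ∈ range K, zg k ^ 2 = (∑ k ∈ range γ, d k ^ 2) + (N - S) ^ 2 := by
    rw [← Finset.sum_range_add_sum_Ico (fun k => zg k ^ 2) (le_of_lt hγK'),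
      Finset.sum_eq_sum_Ico_succ_bot hγK' (fun k => zg k ^ 2)]
    have h1 : ∑ k ∈ range γ, zg k ^ 2 = ∑ k ∈ range γ, d k ^ 2 :=
      Finset.sum_congr rfl fun j hj => by simp [hzg, Finset.mem_range.mp hj]
    have h2 : zg γ = N - S := by simp [hzg]
    have h3 : ∑ k ∈ Finset.Ico (γ + 1) K, zg k ^ 2 = 0 := Finset.sum_eq_zero fun j hj => by
      rw [Finset.mem_Ico] at hj
      simp only [hzg]
      rw [if_neg (by omega : ¬ j < γ), if_neg (by omega : ¬ j = γ)]
      ring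
    rw [h1, h2, h3]
    ring
  have hmem : (∑ k ∈ range γ, d k ^ 2) + (N - S) ^ 2
      ∈ {v : ℕ | ∃ z : ℕ → ℕ, (∀ k < K, z k ≤ d k) ∧
        (∑ k ∈ range K, z k) = N ∧ v = ∑ k ∈ range K, (z k) ^ 2} :=
    ⟨zg, hzg_feas, hzg_sum, hzg_val.symm⟩
  apply le_antisymm
  · apply csSup_le ⟨_, hmem⟩
    rintro v ⟨z, hz, hsum, rfl⟩
    exact key K N d hd γ hγK' hγ hS1 (K * N) z hz hsum (Nat.le_add_left _ _)
  · apply le_csSup _ hmem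
    refine ⟨N ^ 2, ?_⟩
    rintro v ⟨z, hz, hsum, rfl⟩
    calc ∑ k ∈ range K, z k ^ 2 ≤ ∑ k ∈ range K, z k * N := by
          apply Finset.sum_le_sum
          intro k hk
          have : z k ≤ N := hsum ▸ Finset.single_le_sum (fun _ _ => Nat.zero_le _) hk
          calc z k ^ 2 = z k * z k := sq (z k) ▸ rfl
            _ ≤ z k * N := Nat.mul_le_mul_left _ this
      _ = N * N := by rw [← Finset.sum_mul, hsum]
      _ = N ^ 2 := (sq N).symm

private lemma filter_sum {K : ℕ} (g : Fin K → ℕ) (γ' : ℕ) (hγ' : γ' ≤ K) :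
    (∑ k ∈ Finset.univ.filter fun k : Fin K => (k : ℕ) < γ', g k)
      = ∑ n ∈ range γ', if h : n < K then g ⟨n, h⟩ else 0 := by
  rw [Finset.sum_filter]
  have h0 : ∀ k : Fin K, (if (k : ℕ) < γ' then g k else 0)
      = (fun n => if n < γ' then (if h : n < K then g ⟨n, h⟩ else 0) else 0) (k : ℕ) := by
    intro k
    simp [k.isLt]
  rw [Finset.sum_congr rfl fun k _ => h0 k,
    Fin.sum_univ_eq_sum_range (fun n => if n < γ' then (if h : n < K then g ⟨n, h⟩ else 0) else 0) K,
    ← Finset.sum_filter]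
  apply Finset.sum_congr _ fun _ _ => rfl
  ext a
  simp only [Finset.mem_filter, Finset.mem_range]
  omega

private lemma set_eq (N K : ℕ) (M : Fin N → Fin K → ℕ) (hM : ∀ i k, M i k ≤ 1)
    (σ : Equiv.Perm (Fin K)) :
    {v : ℕ | ∃ Z : Fin N → Fin K → ℕ, (∀ i k, Z i k ≤ M i k) ∧
      (∑ k, ∑ i, Z i k) = N ∧ v = ∑ k, (∑ i, Z i k * M i k) ^ 2}
    = {v : ℕ | ∃ z : ℕ → ℕ,
        (∀ k < K, z k ≤ (fun n => if h : n < K then ∑ i, M i (σ ⟨n, h⟩) else 0) k) ∧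
        (∑ k ∈ range K, z k) = N ∧ v = ∑ k ∈ range K, (z k) ^ 2} := by
  classical
  ext v
  constructor
  · rintro ⟨Z, hZ, hZsum, rfl⟩
    have hZM : ∀ (i : Fin N) (c : Fin K), Z i c * M i c = Z i c := by
      intro i c
      have h1 := hM i c
      have h2 := hZ i c
      interval_cases (M i c) <;> omega
    refine ⟨fun n => if h : n < K then ∑ i, Z i (σ ⟨n, h⟩) else 0, ?_, ?_, ?_⟩
    · intro k hk
      simp only [dif_pos hk]
      exact Finset.sum_le_sum fun i _ => hZ i _
    · rw [← Fin.sum_univ_eq_sum_range (fun n => if h : n < K then ∑ i, Z i (σ ⟨n, h⟩) else 0) K]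
      have : ∀ k : Fin K, (if h : (k : ℕ) < K then ∑ i, Z i (σ ⟨(k : ℕ), h⟩) else 0)
          = ∑ i, Z i (σ k) := fun k => by simp [k.isLt]
      rw [Finset.sum_congr rfl fun k _ => this k, Equiv.sum_comp σ (fun c => ∑ i, Z i c)]
      exact hZsum
    · rw [Finset.sum_congr rfl fun c (_ : c ∈ Finset.univ) => by
        rw [Finset.sum_congr rfl fun i (_ : i ∈ Finset.univ) => hZM i c]]
      rw [← Equiv.sum_comp σ (fun c => (∑ i, Z i c) ^ 2)]
      rw [← Fin.sum_univ_eq_sum_range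
        (fun n => (if h : n < K then ∑ i, Z i (σ ⟨n, h⟩) else 0) ^ 2) K]
      apply Finset.sum_congr rfl fun k _ => by simp [k.isLt]
  · rintro ⟨z, hz, hzsum, rfl⟩
    have hw : ∀ c : Fin K, z ((σ.symm c : Fin K) : ℕ) ≤ ∑ i, M i c := by
      intro c
      have h1 := hz _ (σ.symm c).isLt
      simpa using h1
    have hcard : ∀ c : Fin K,
        z ((σ.symm c : Fin K) : ℕ) ≤ (Finset.univ.filter fun i => 1 ≤ M i c).card := by
      intro c
      refine (hw c).trans (le_of_eq ?_)
      rw [Finset.card_filter]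
      apply Finset.sum_congr rfl
      intro i _
      have := hM i c
      by_cases h : 1 ≤ M i c
      · rw [if_pos h]; omega
      · rw [if_neg h]; omega
    choose T hT hTcard using fun c : Fin K => Finset.exists_subset_card_eq (hcard c)
    set Z : Fin N → Fin K → ℕ := fun i c => if i ∈ T c then 1 else 0 with hZdef
    have hZ : ∀ i c, Z i c ≤ M i c := by
      intro i c
      by_cases h : i ∈ T c
      · have := Finset.mem_filter.mp (hT c h)
        simp only [hZdef, if_pos h]
        exact this.2
      · simp [hZdef, h]
    have hcol : ∀ c : Fin K, ∑ i, Z i c = z ((σ.symm c : Fin K) : ℕ) := by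
      intro c
      simp only [hZdef]
      rw [Finset.sum_ite_mem, Finset.univ_inter, Finset.sum_const, smul_eq_mul, mul_one]
      exact hTcard c
    have hZM : ∀ (i : Fin N) (c : Fin K), Z i c * M i c = Z i c := by
      intro i c
      have h1 := hM i c
      have h2 := hZ i c
      interval_cases (M i c) <;> omega
    have htot : ∑ c : Fin K, z ((σ.symm c : Fin K) : ℕ) = N := by
      rw [Equiv.sum_comp σ.symm (fun c => z (c : ℕ)), Fin.sum_univ_eq_sum_range (fun n => z n) K]
      exact hzsum
    refine ⟨Z, hZ, ?_, ?_⟩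
    · rw [Finset.sum_congr rfl fun c (_ : c ∈ Finset.univ) => hcol c]
      exact htot
    · rw [Finset.sum_congr rfl fun c (_ : c ∈ Finset.univ) => by
        rw [Finset.sum_congr rfl fun i (_ : i ∈ Finset.univ) => hZM i c, hcol c]]
      rw [← Fin.sum_univ_eq_sum_range (fun n => z n ^ 2) K,
        ← Equiv.sum_comp σ.symm (fun c => z (c : ℕ) ^ 2)]


/-- Greedy closed form for the SoS upper bound.
First part: for nonincreasing caps `d 0 ≥ d 1 ≥ … ≥ d (K−1)` with total at least `N`,
and `γ ≤ K` the largest index whose partial sum `∑_{k<γ} d k` is `< N`, the maximum of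
`∑_{k<K} (z k)²` over integer vectors `z` with `z k ≤ d k` and `∑_{k<K} z k = N` equals
`∑_{k<γ} (d k)² + (N − ∑_{k<γ} d k)²`.
Second part: consequently, for a 0-1 matrix `M ∈ {0,1}^{N×K}` whose column sums
`Δ k = ∑ i, M i k`, sorted decreasingly by a permutation `σ`, have total at least `N`,
`R-IQP(M)` equals `∑_{k<γ} Δ(σ k)² + (N − ∑_{k<γ} Δ(σ k))²` where `γ` is the largest
index with `∑_{k<γ} Δ(σ k) < N`. -/
theorem RIQP_closed_form :
    (∀ (K N : ℕ) (d : ℕ → ℕ),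
      (∀ k₁ k₂, k₁ ≤ k₂ → k₂ < K → d k₂ ≤ d k₁) →
      N ≤ ∑ k ∈ Finset.range K, d k →
      ∀ γ, γ ≤ K → (∑ k ∈ Finset.range γ, d k) < N →
      (∀ γ', γ' ≤ K → (∑ k ∈ Finset.range γ', d k) < N → γ' ≤ γ) →
      sSup {v : ℕ | ∃ z : ℕ → ℕ, (∀ k < K, z k ≤ d k) ∧
          (∑ k ∈ Finset.range K, z k) = N ∧ v = ∑ k ∈ Finset.range K, (z k) ^ 2}
        = (∑ k ∈ Finset.range γ, (d k) ^ 2) + (N - ∑ k ∈ Finset.range γ, d k) ^ 2) ∧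
    (∀ (N K : ℕ) (M : Fin N → Fin K → ℕ), (∀ i k, M i k ≤ 1) →
      ∀ σ : Equiv.Perm (Fin K),
      (∀ k₁ k₂ : Fin K, k₁ ≤ k₂ → (∑ i, M i (σ k₂)) ≤ ∑ i, M i (σ k₁)) →
      N ≤ ∑ k, ∑ i, M i k →
      ∀ γ, γ ≤ K →
      (∑ k ∈ Finset.univ.filter fun k : Fin K => (k : ℕ) < γ, ∑ i, M i (σ k)) < N →
      (∀ γ', γ' ≤ K →
        (∑ k ∈ Finset.univ.filter fun k : Fin K => (k : ℕ) < γ', ∑ i, M i (σ k)) < N →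
        γ' ≤ γ) →
      RIQP M = (∑ k ∈ Finset.univ.filter fun k : Fin K => (k : ℕ) < γ,
                  (∑ i, M i (σ k)) ^ 2)
        + (N - ∑ k ∈ Finset.univ.filter fun k : Fin K => (k : ℕ) < γ, ∑ i, M i (σ k)) ^ 2) := by
  constructor
  · exact fun K N d hd hN γ hγK hγ hmax => part1 K N d hd hN γ hγK hγ hmax
  · intro N K M hM σ hσ hN γ hγK hγ hmax
    set D : ℕ → ℕ := fun n => if h : n < K then ∑ i, M i (σ ⟨n, h⟩) else 0 with hD
    have hfil : ∀ γ', γ' ≤ K →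
        (∑ k ∈ Finset.univ.filter fun k : Fin K => (k : ℕ) < γ', ∑ i, M i (σ k))
          = ∑ n ∈ range γ', D n :=
      fun γ' h => filter_sum (fun k => ∑ i, M i (σ k)) γ' h
    have hfil2 : (∑ k ∈ Finset.univ.filter fun k : Fin K => (k : ℕ) < γ, (∑ i, M i (σ k)) ^ 2)
        = ∑ n ∈ range γ, D n ^ 2 := by
      rw [filter_sum (fun k => (∑ i, M i (σ k)) ^ 2) γ hγK]
      apply Finset.sum_congr rfl
      intro n hn
      have hnK : n < K := lt_of_lt_of_le (Finset.mem_range.mp hn) hγK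
      simp [hD, hnK]
    have hDmono : ∀ k₁ k₂, k₁ ≤ k₂ → k₂ < K → D k₂ ≤ D k₁ := by
      intro k₁ k₂ h12 h2K
      have h1K : k₁ < K := lt_of_le_of_lt h12 h2K
      simp only [hD, dif_pos h1K, dif_pos h2K]
      exact hσ ⟨k₁, h1K⟩ ⟨k₂, h2K⟩ h12
    have hsumD : ∑ k ∈ range K, D k = ∑ k, ∑ i, M i k := by
      rw [← Fin.sum_univ_eq_sum_range D K]
      have : ∀ k : Fin K, D (k : ℕ) = ∑ i, M i (σ k) := fun k => by simp [hD, k.isLt]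
      rw [Finset.sum_congr rfl fun k _ => this k, Equiv.sum_comp σ (fun c => ∑ i, M i c)]
    rw [RIQP, set_eq N K M hM σ, hfil γ hγK, hfil2]
    exact part1 K N D hDmono (hsumD ▸ hN) γ hγK (hfil γ hγK ▸ hγ)
      (fun γ' hγ'K h => hmax γ' hγ'K (by rw [hfil γ' hγ'K]; exact h))
end
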